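/- Let φ ∈ L^∞(𝕋). If the slant H-Toeplitz operator V_φ is a partial isometry, i.e. V_φ V_φ* V_φ = V_φ, then (W P M_{1−|φ|²} W*) · (W P M_φ K) = 0 as an operator on H², where 1 − |φ|² ∈ L^∞(𝕋) and W* is restricted to H². -/

import Mathlib

/-!
The operators `W` and `K` are co-isometries, `W W* = 1` and `K K* = 1`, as one reads off on the
Fourier basis (`K` even maps the basis of `H²` bijectively onto that of `L²`), and `W*` maps
`H²` into itself. Hence `V V* = W P M_φ M_φ* W*` on `H²`. A bounded operator whose matrix is
constant along diagonals is normal, so `M_φ* M_φ = M_φ M_φ*`. For `g = V f` the partial isometry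
identity says `V V* g = g`, i.e. `W P M_φ M_φ* W* g = g`, while `W P W* g = W W* g = g`;
subtracting gives `W P M_{1-|φ|²} W* g = 0`.
-/

open scoped InnerProductSpace ComplexInnerProductSpace ComplexConjugate
open Submodule ContinuousLinearMap

theorem Submodule.topologicalClosure_span_le_comap {R M N : Type*} [Semiring R]
    [TopologicalSpace M] [AddCommMonoid M] [Module R M] [ContinuousAdd M]
    [ContinuousConstSMul R M] [TopologicalSpace N] [AddCommMonoid N] [Module R N]
    [ContinuousAdd N] [ContinuousConstSMul R N]
    {s : Set M} {t : Set N} (T : M →L[R] N) (h : Set.MapsTo T s t) :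
    (span R s).topologicalClosure ≤ (span R t).topologicalClosure.comap (T : M →ₗ[R] N) :=
  topologicalClosure_minimal _
    (span_le.mpr fun _ hx => le_topologicalClosure _ (subset_span (h hx)))
    ((isClosed_topologicalClosure _).preimage T.continuous)

theorem Equiv.intEquivNat_symm_two_mul (n : ℕ) : Equiv.intEquivNat.symm (2 * n) = n := by
  rw [Equiv.symm_apply_eq]
  rfl

theorem Equiv.intEquivNat_symm_two_mul_add_one (n : ℕ) :
    Equiv.intEquivNat.symm (2 * n + 1) = -n - 1 := by
  rw [Equiv.symm_apply_eq, show (-n - 1 : ℤ) = Int.negSucc n by omega]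
  rfl

section

variable {ι κ 𝕜 E F : Type*} [RCLike 𝕜]
  [NormedAddCommGroup E] [InnerProductSpace 𝕜 E] [NormedAddCommGroup F] [InnerProductSpace 𝕜 F]

theorem Submodule.exists_hilbertBasis_of_eq_topologicalClosure_span {v : ι → E}
    (hv : Orthonormal 𝕜 v) {U : Submodule 𝕜 E} [CompleteSpace U]
    (hU : U = (span 𝕜 (Set.range v)).topologicalClosure) (w : ι → U)
    (hw : ∀ i, (w i : E) = v i) :
    ∃ b : HilbertBasis ι 𝕜 U, ⇑b = w := by
  have hw_orth : Orthonormal 𝕜 w :=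
    U.subtypeₗᵢ.orthonormal_comp_iff.mp (by convert hv using 1; exact funext hw)
  refine ⟨.mkOfOrthogonalEqBot hw_orth ((Submodule.eq_bot_iff _).mpr fun x hx => ?_),
    HilbertBasis.coe_mkOfOrthogonalEqBot _ _⟩
  have hxU : (x : E) ∈ Uᗮ := by
    suffices (x : E) ∈ (span 𝕜 (Set.range v))ᗮ by rwa [← orthogonal_closure, ← hU] at this
    intro u hu
    induction hu using span_induction with
    | mem _ hu => obtain ⟨i, rfl⟩ := hu; rw [← hw]; exact hx _ (subset_span ⟨i, rfl⟩)
    | zero => exact inner_zero_left _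
    | add _ _ _ _ hy hz => rw [inner_add_left, hy, hz, add_zero]
    | smul c _ _ hy => rw [inner_smul_left, hy, mul_zero]
  exact Subtype.ext (inner_self_eq_zero.mp (inner_right_of_mem_orthogonal x.2 hxU))

namespace HilbertBasis

theorem ext_inner (b : HilbertBasis ι 𝕜 E) {x y : E} (h : ∀ i, ⟪b i, x⟫_𝕜 = ⟪b i, y⟫_𝕜) :
    x = y :=
  b.repr.injective <| lp.ext <| funext fun i => by simp only [b.repr_apply_apply, h]

theorem ext_continuousLinearMap (b : HilbertBasis ι 𝕜 E) {S T : E →L[𝕜] F}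
    (h : ∀ i, S (b i) = T (b i)) : S = T :=
  ext_on (dense_iff_topologicalClosure_eq_top.mpr b.dense_span) <| by
    rintro _ ⟨i, rfl⟩
    exact h i

variable [CompleteSpace E] [CompleteSpace F]

theorem adjoint_apply_eq (b : HilbertBasis ι 𝕜 E) (T : E →L[𝕜] F) {x : E} {y : F}
    (h : ∀ i, ⟪T (b i), y⟫_𝕜 = ⟪b i, x⟫_𝕜) : adjoint T y = x :=
  b.ext_inner fun i => by rw [adjoint_inner_right, h]

theorem comp_adjoint_eq_id (b : HilbertBasis ι 𝕜 E) (b' : HilbertBasis κ 𝕜 F) (σ : ι ≃ κ)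
    {T : E →L[𝕜] F} (hT : ∀ i, T (b i) = b' (σ i)) : T ∘L adjoint T = .id 𝕜 F := by
  classical
  have hadj : ∀ i, adjoint T (b' (σ i)) = b i := fun i => b.adjoint_apply_eq T fun j => by
    rw [hT, orthonormal_iff_ite.mp b'.orthonormal, orthonormal_iff_ite.mp b.orthonormal,
      σ.injective.eq_iff]
  refine b'.ext_continuousLinearMap fun k => ?_
  obtain ⟨i, rfl⟩ := σ.surjective k
  rw [comp_apply, hadj, hT, id_apply]

theorem isStarNormal_of_inner_eq_sub {G : Type*} [AddCommGroup G] (b : HilbertBasis G 𝕜 E)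
    {T : E →L[𝕜] E} {a : G → 𝕜} (hT : ∀ i j, ⟪b i, T (b j)⟫_𝕜 = a (i - j)) :
    IsStarNormal T := by
  refine ⟨b.ext_continuousLinearMap fun j => b.ext_inner fun i => ?_⟩
  have hL : ⟪b i, adjoint T (T (b j))⟫_𝕜 = ∑' k, conj (a (k - i)) * a (k - j) := by
    rw [adjoint_inner_right, ← b.tsum_inner_mul_inner]
    congr 1
    funext k
    rw [← inner_conj_symm, hT, hT]
  have hR : ⟪b i, T (adjoint T (b j))⟫_𝕜 = ∑' k, a (i - k) * conj (a (j - k)) := by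
    rw [← adjoint_inner_left, ← b.tsum_inner_mul_inner]
    congr 1
    funext k
    rw [adjoint_inner_left, adjoint_inner_right, ← inner_conj_symm (T (b k)), hT, hT]
  change ⟪b i, adjoint T (T (b j))⟫_𝕜 = ⟪b i, T (adjoint T (b j))⟫_𝕜
  rw [hL, hR, ← (Equiv.subLeft (i + j)).tsum_eq]
  congr 1
  funext k
  rw [Equiv.subLeft_apply, show i + j - k - i = j - k by abel,
    show i + j - k - j = i - k by abel, mul_comm]

theorem slant_adjoint_apply {W : E →L[𝕜] E} (e : HilbertBasis ℤ 𝕜 E)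
    (hW : ∀ n : ℤ, W (e (2 * n)) = e n ∧ W (e (2 * n + 1)) = 0) (n : ℤ) :
    adjoint W (e n) = e (2 * n) := by
  classical
  refine e.adjoint_apply_eq W fun i => ?_
  obtain ⟨k, rfl | rfl⟩ := Int.even_or_odd' i
  · simp only [(hW k).1, orthonormal_iff_ite.mp e.orthonormal,
      Int.mul_eq_mul_left_iff two_ne_zero]
  · rw [(hW k).2, inner_zero_left, orthonormal_iff_ite.mp e.orthonormal, if_neg (by omega)]

theorem slant_comp_adjoint {W : E →L[𝕜] E} (e : HilbertBasis ℤ 𝕜 E)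
    (hW : ∀ n : ℤ, W (e (2 * n)) = e n ∧ W (e (2 * n + 1)) = 0) :
    W ∘L adjoint W = .id 𝕜 E :=
  e.ext_continuousLinearMap fun n => by
    rw [comp_apply, e.slant_adjoint_apply hW, (hW n).1, id_apply]

end HilbertBasis

theorem ContinuousLinearMap.adjoint_apply_of_coe_apply_eq [CompleteSpace E] [CompleteSpace F]
    {U : Submodule 𝕜 E} [CompleteSpace U] {K : F →L[𝕜] E} {M W : E →L[𝕜] E} {V : F →L[𝕜] U}
    (hV : ∀ f, (V f : E) = W (U.orthogonalProjectionOnto (M (K f)))) (g : U) :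
    adjoint V g = adjoint K (adjoint M (U.orthogonalProjectionOnto (adjoint W g))) :=
  ext_inner_left 𝕜 fun f => by
    rw [adjoint_inner_right, adjoint_inner_right, adjoint_inner_right, coe_inner, hV,
      ← adjoint_inner_right]
    exact U.inner_starProjection_left_eq_right _ _

end

/-- If `V_φ` is a partial isometry, i.e. `V_φ V_φ* V_φ = V_φ`, then
`(W P M_{1-|φ|²} W*) (W P M_φ K) = 0`, where `M_{1-|φ|²} = I - M_φ* M_φ`. -/
theorem partial_isometry_consequence
    {L2 : Type*} [NormedAddCommGroup L2] [InnerProductSpace ℂ L2] [CompleteSpace L2]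
    -- the orthonormal (Fourier) basis `e n ↔ zⁿ` of `L²(𝕋)`
    (e : HilbertBasis ℤ ℂ L2)
    -- the Hardy space `H²`, the closed linear span of `{e n : n ≥ 0}`
    (H2 : Submodule ℂ L2) [CompleteSpace H2]
    (hH2 : H2 = (Submodule.span ℂ (Set.range fun n : ℕ => e (n : ℤ))).topologicalClosure)
    (eH : ℕ → H2) (heH : ∀ n : ℕ, (eH n : L2) = e (n : ℤ))
    -- the operator `W`: `W e_{2n} = e n`, `W e_{2n+1} = 0` for all `n ∈ ℤ`
    (W : L2 →L[ℂ] L2)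
    (hW : ∀ n : ℤ, W (e (2 * n)) = e n ∧ W (e (2 * n + 1)) = 0)
    -- the operator `K : H² → L²`: `K e_{2n} = e n`, `K e_{2n+1} = e_{-n-1}` for all `n ≥ 0`
    (K : H2 →L[ℂ] L2)
    (hK : ∀ n : ℕ, K (eH (2 * n)) = e (n : ℤ) ∧ K (eH (2 * n + 1)) = e (-(n : ℤ) - 1))
    -- `φ ∈ L^∞`, encoded by its Fourier coefficients `a` and multiplication operator `M = M_φ`
    (a : ℤ → ℂ) (M : L2 →L[ℂ] L2)
    (hM : ∀ i j : ℤ, ⟪e i, M (e j)⟫ = a (i - j))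
    -- the slant H-Toeplitz operator `V_φ = W P M_φ K : H² → H²`
    (V : H2 →L[ℂ] H2)
    (hV : ∀ f : H2, (V f : L2) = W ↑(Submodule.orthogonalProjectionOnto H2 (M (K f))))
    (hpi : V.comp ((ContinuousLinearMap.adjoint V).comp V) = V) :
    ∀ f : H2,
      W ↑(Submodule.orthogonalProjectionOnto H2
        ((ContinuousLinearMap.id ℂ L2 - (ContinuousLinearMap.adjoint M).comp M)
          (ContinuousLinearMap.adjoint W ((V f : L2))))) = 0 := by
  intro f
  obtain ⟨eH', rfl⟩ := exists_hilbertBasis_of_eq_topologicalClosure_span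
    (e.orthonormal.comp _ Nat.cast_injective) hH2 eH heH
  have hKe : ∀ m, K (eH' m) = e (Equiv.intEquivNat.symm m) := fun m => by
    obtain ⟨k, rfl | rfl⟩ := Nat.even_or_odd' m
    · rw [(hK k).1, Equiv.intEquivNat_symm_two_mul]
    · rw [(hK k).2, Equiv.intEquivNat_symm_two_mul_add_one]
  have hKK := eH'.comp_adjoint_eq_id e _ hKe
  have hWW := e.slant_comp_adjoint hW
  have hMM : adjoint M ∘L M = M ∘L adjoint M :=
    (e.isStarNormal_of_inner_eq_sub hM).star_comm_self
  have hg : adjoint W (V f : L2) ∈ H2 := by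
    refine (hH2 ▸ topologicalClosure_span_le_comap (adjoint W) ?_) (hH2 ▸ (V f).2)
    rintro _ ⟨n, rfl⟩
    exact ⟨2 * n, by simp [e.slant_adjoint_apply hW]⟩
  have hPg : (H2.orthogonalProjectionOnto (adjoint W (V f : L2)) : L2) = adjoint W (V f : L2) :=
    starProjection_eq_self_iff.mpr hg
  have hfix : W (H2.orthogonalProjectionOnto (M (adjoint M (adjoint W (V f : L2))))) = V f := by
    have := congrArg (fun T => (T f : L2)) hpi
    simp only [comp_apply] at this
    rwa [hV, adjoint_apply_of_coe_apply_eq hV, ← comp_apply K, hKK, id_apply, hPg] at this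
  rw [sub_apply, id_apply, hMM, comp_apply, map_sub, Submodule.coe_sub, map_sub, hPg,
    ← comp_apply W, hWW, id_apply, hfix, sub_self]
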